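/- arXiv:1810.00970 — 3 statements merged into one kernel-verified Lean document; each statement's English description precedes it below -/
import Mathlib

section
/- Let i^(1),…,i^(r) and j^(1),…,j^(r) be words over {1,…,n} such that for each k ∈ {1,…,r}, the words i^(k) and j^(k) have the same length and i^(k) ≥ j^(k) in the lexicographic order. Then maxSh(i^(1),…,i^(r)) ≥ maxSh(j^(1),…,j^(r)); moreover this inequality is an equality if and only if i^(k) = j^(k) for all k. -/
/-- `IsShuffle u v w` : the word `w` is a shuffle (interleaving) of the words `u` and `v`. -/
inductive IsShuffle : List ℕ → List ℕ → List ℕ → Prop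
  | nil : IsShuffle [] [] []
  | left (a : ℕ) {u v w : List ℕ} : IsShuffle u v w → IsShuffle (a :: u) v (a :: w)
  | right (a : ℕ) {u v w : List ℕ} : IsShuffle u v w → IsShuffle u (a :: v) (a :: w)

/-- `IsShuffleMulti [w_1,…,w_r] w` : the word `w` is a shuffle of the words `w_1,…,w_r`,
i.e. the positions of `w` can be partitioned into `r` increasing subsequences whose
readings are `w_1,…,w_r`. -/
inductive IsShuffleMulti : List (List ℕ) → List ℕ → Prop
  | nil : IsShuffleMulti [] []
  | cons {u : List ℕ} {us : List (List ℕ)} {v w : List ℕ} :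
      IsShuffleMulti us v → IsShuffle u v w → IsShuffleMulti (u :: us) w

lemma isShuffle_append (u y : List ℕ) : IsShuffle u y (u ++ y) := by
  induction u with
  | nil =>
    induction y with
    | nil => exact .nil
    | cons a t ih => exact .right a ih
  | cons a t ih => exact .left a ih

lemma isShuffle_symm {u v w : List ℕ} (h : IsShuffle u v w) : IsShuffle v u w := by
  induction h with
  | nil => exact .nil
  | left a _ ih => exact .right a ih
  | right a _ ih => exact .left a ih

lemma isShuffle_length {u v w : List ℕ} (h : IsShuffle u v w) :
    w.length = u.length + v.length := by
  induction h with
  | nil => rfl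
  | left a _ ih => simp [ih]; omega
  | right a _ ih => simp [ih]; omega

lemma isShuffleMulti_length {ws : List (List ℕ)} {w : List ℕ} (h : IsShuffleMulti ws w) :
    w.length = (ws.map List.length).sum := by
  induction h with
  | nil => rfl
  | cons _ hs ih => simp [isShuffle_length hs, ih]

lemma cons_le_cases {a b : ℕ} {s t : List ℕ} (h : a :: s ≤ b :: t) :
    a < b ∨ (a = b ∧ s ≤ t) := by
  rcases lt_or_eq_of_le h with h | h
  · have h' : List.Lex (· < ·) (a :: s) (b :: t) := h
    cases h' with
    | rel h => exact Or.inl h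
    | cons h => exact Or.inr ⟨rfl, le_of_lt h⟩
  · cases h; exact Or.inr ⟨rfl, le_rfl⟩

lemma lt_cons_cons {a b : ℕ} (s t : List ℕ) (h : a < b) : a :: s < b :: t :=
  List.Lex.rel h

lemma cons_lt_cons' (a : ℕ) {s t : List ℕ} (h : s < t) : a :: s < a :: t :=
  List.Lex.cons h

/-- Key replacement lemma. -/
lemma shuffle_replace : ∀ {v y w : List ℕ}, IsShuffle v y w → ∀ u : List ℕ,
    u.length = v.length → v ≤ u →
    ∃ w', IsShuffle u y w' ∧ w ≤ w' ∧ (v < u → w < w') := by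
  intro v y w h
  induction h with
  | nil =>
    intro u hlen _
    obtain rfl : u = [] := List.length_eq_zero_iff.mp hlen
    exact ⟨[], .nil, le_rfl, fun h => absurd h (lt_irrefl _)⟩
  | @left a v₀ y₀ w₀ h ih =>
    intro u hlen hle
    match u with
    | [] => simp at hlen
    | b :: u₀ =>
      simp at hlen
      rcases cons_le_cases hle with hab | ⟨rfl, hle'⟩
      · refine ⟨b :: (u₀ ++ y₀), .left b (isShuffle_append _ _), ?_, ?_⟩
        · exact le_of_lt (lt_cons_cons _ _ hab)
        · intro _; exact lt_cons_cons _ _ hab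
      · obtain ⟨w₁, hs, hw, hstrict⟩ := ih u₀ hlen hle'
        refine ⟨a :: w₁, .left a hs, ?_, ?_⟩
        · rcases lt_or_eq_of_le hw with h' | h'
          · exact le_of_lt (cons_lt_cons' a h')
          · rw [h']
        · intro hlt
          have : List.Lex (· < ·) (a :: v₀) (a :: u₀) := hlt
          cases this with
          | rel h => exact absurd h (lt_irrefl _)
          | cons h => exact cons_lt_cons' a (hstrict h)
  | @right a v₀ y₀ w₀ h ih =>
    intro u hlen hle
    obtain ⟨w₁, hs, hw, hstrict⟩ := ih u hlen hle
    refine ⟨a :: w₁, .right a hs, ?_, fun hlt => cons_lt_cons' a (hstrict hlt)⟩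
    rcases lt_or_eq_of_le hw with h' | h'
    · exact le_of_lt (cons_lt_cons' a h')
    · rw [h']

lemma forall₂_sum_len {is js : List (List ℕ)}
    (h : List.Forall₂ (fun u v => u.length = v.length ∧ v ≤ u) is js) :
    (is.map List.length).sum = (js.map List.length).sum := by
  induction h with
  | nil => rfl
  | cons h _ ih => simp [h.1, ih]

lemma multi_replace : ∀ {is js : List (List ℕ)},
    List.Forall₂ (fun u v => u.length = v.length ∧ v ≤ u) is js →
    ∀ {w : List ℕ}, IsShuffleMulti js w →
    ∃ w', IsShuffleMulti is w' ∧ w ≤ w' ∧ (is ≠ js → w < w') := by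
  intro is js h
  induction h with
  | nil =>
    intro w hw
    cases hw
    exact ⟨[], .nil, le_rfl, fun h => absurd rfl h⟩
  | @cons u v us vs huv hrest ih =>
    intro w hw
    cases hw with
    | cons hy hs =>
      rename_i y
      obtain ⟨y', hy', hyle, hystrict⟩ := ih hy
      -- step 1: replace y by y' inside the shuffle (swap roles)
      have hylen : y'.length = y.length := by
        rw [isShuffleMulti_length hy, isShuffleMulti_length hy', forall₂_sum_len hrest]
      obtain ⟨w₁, hs₁, hwle₁, hstrict₁⟩ :=
        shuffle_replace (isShuffle_symm hs) y' hylen hyle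
      -- step 2: replace v by u
      obtain ⟨w₂, hs₂, hwle₂, hstrict₂⟩ :=
        shuffle_replace (isShuffle_symm hs₁) u huv.1 huv.2
      refine ⟨w₂, .cons hy' hs₂, le_trans hwle₁ hwle₂, ?_⟩
      intro hne
      by_cases hvu : v = u
      · subst hvu
        have hus : us ≠ vs := fun h => hne (by rw [h])
        exact lt_of_lt_of_le (hstrict₁ (hystrict hus)) hwle₂
      · have : v < u := lt_of_le_of_ne huv.2 hvu
        exact lt_of_le_of_lt hwle₁ (hstrict₂ this)

/-- Kleshchev–Ram: if `i^(k)` and `j^(k)` have the same length and `i^(k) ≥ j^(k)` for all k,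
then `maxSh(i^(1),…,i^(r)) ≥ maxSh(j^(1),…,j^(r))`, with equality iff `i^(k) = j^(k)` for
all k. -/
theorem maxShuffle_mono (n : ℕ) (hn : 1 ≤ n) (is js : List (List ℕ))
    (halph : ∀ w ∈ is, ∀ a ∈ w, 1 ≤ a ∧ a ≤ n)
    (halph' : ∀ w ∈ js, ∀ a ∈ w, 1 ≤ a ∧ a ≤ n)
    (h : List.Forall₂ (fun u v => u.length = v.length ∧ v ≤ u) is js)
    (mi mj : List ℕ)
    (hmi : IsGreatest {w | IsShuffleMulti is w} mi)
    (hmj : IsGreatest {w | IsShuffleMulti js w} mj) :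
    mj ≤ mi ∧ (mi = mj ↔ is = js) := by

  obtain ⟨wi, hwi, hle, hstrict⟩ := multi_replace h hmj.1
  have h1 : mj ≤ mi := le_trans hle (hmi.2 hwi)
  refine ⟨h1, ⟨fun heq => ?_, fun heq => ?_⟩⟩
  · by_contra hne
    have := lt_of_lt_of_le (hstrict hne) (hmi.2 hwi)
    rw [heq] at this
    exact lt_irrefl _ this
  · subst heq
    exact le_antisymm (hmj.2 hmi.1) (hmi.2 hmj.1)
end

section
/- Let n ≥ 4 and 2 ≤ j ≤ n−2. For words over {1,…,n}, write u ⊙ w for the lexicographically greatest shuffle of u and w, and ⟨a,b⟩ for the segment (a, a+1, …, b). Then for every dominant word μ over {1,…,n}, the strict inequality (μ ⊙ ⟨j+1,n⟩) ⊙ ⟨j,n−1⟩ > (μ ⊙ ⟨j+1,n−1⟩) ⊙ ⟨j,n⟩ holds in the lexicographic order. -/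
/-- The segment ⟨k,l⟩, i.e. the word (k, k+1, …, l). -/
def segWord (k l : ℕ) : List ℕ := List.range' k (l + 1 - k)

/-- `w` is a segment of the alphabet {1,…,n}. -/
def IsSegment (n : ℕ) (w : List ℕ) : Prop :=
  ∃ k l : ℕ, 1 ≤ k ∧ k ≤ l ∧ l ≤ n ∧ w = segWord k l

/-- A dominant word of type `A_n`: a concatenation of segments in weakly decreasing
lexicographic order (this is then automatically the canonical factorization). -/
def IsDominant (n : ℕ) (w : List ℕ) : Prop :=
  ∃ fs : List (List ℕ), List.Chain' (· ≥ ·) fs ∧ (∀ u ∈ fs, IsSegment n u) ∧ fs.flatten = w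

/-!
A dominant word is the concatenation of a weakly decreasing list of segments, and its greatest
shuffle with a segment `s` is again of this form: insert `s` into the list at its sorted place
(`isGreatest_isShuffle_insertDesc`). This is proved letter by letter; the only delicate case, when
`s` and the first segment start with the same letter `k`, reduces to the exchange inequality
`flatten_exchange_lt`: for `M < L`, inserting `⟨k+1,M⟩` and `⟨k,L⟩` gives a smaller word than
inserting `⟨k+1,L⟩` and `⟨k,M⟩`. Indeed the two words agree up to the place where the second one
reads `⟨k+1,L⟩`, and from there the first can follow it at most along a proper prefix
(`flatten_lt_segWord_append`). Both sides of the theorem are words of this kind, with `k = j`,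
`M = n - 1` and `L = n`.
-/

theorem isShuffle_nil_right (u : List ℕ) : IsShuffle u [] u := by
  induction u with
  | nil => exact .nil
  | cons a u ih => exact .left a ih

theorem isShuffle_append_self (u v : List ℕ) : IsShuffle u v (v ++ u) := by
  induction v with
  | nil => exact isShuffle_nil_right u
  | cons a v ih => exact .right a ih

theorem IsShuffle.append_left {u v w : List ℕ} (x : List ℕ) (h : IsShuffle u v w) :
    IsShuffle (x ++ u) v (x ++ w) := by
  induction x with
  | nil => exact h
  | cons a x ih => exact .left a ih

theorem IsShuffle.cons_inv {u v w : List ℕ} {c : ℕ} (h : IsShuffle u v (c :: w)) :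
    (∃ u', u = c :: u' ∧ IsShuffle u' v w) ∨ (∃ v', v = c :: v' ∧ IsShuffle u v' w) := by
  cases h with
  | left _ h => exact .inl ⟨_, rfl, h⟩
  | right _ h => exact .inr ⟨_, rfl, h⟩

namespace SegmentShuffle

section LexOrder

/- The order on `List α` is Mathlib's linear order built from `List.Lex`, whose `≤` is not core's
`List.le`, so the core lemmas about `≤` on lists do not apply to it. -/

variable {α : Type*} [LinearOrder α]

theorem nil_le (u : List α) : [] ≤ u := by
  cases u with
  | nil => exact le_rfl
  | cons a u => exact (List.nil_lt_cons a u).le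

theorem eq_nil_of_le_nil {u : List α} (h : u ≤ []) : u = [] := by
  cases u with
  | nil => rfl
  | cons a u => exact absurd h (List.nil_lt_cons a u).not_ge

theorem append_le_append_left (x : List α) {u v : List α} (h : u ≤ v) : x ++ u ≤ x ++ v := by
  rcases h.lt_or_eq with h | rfl
  · exact (List.append_left_lt h).le
  · exact le_rfl

theorem le_append_right (u v : List α) : u ≤ u ++ v := by
  simpa using append_le_append_left u (nil_le v)

theorem head_le_of_cons_le_cons {a b : α} {u v : List α} (h : a :: u ≤ b :: v) : a ≤ b := by
  rcases h.lt_or_eq with h | h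
  · exact List.head_le_of_lt h
  · exact (List.cons.inj h).1.le

end LexOrder

theorem segWord_of_lt {k l : ℕ} (h : l < k) : segWord k l = [] := by
  simp [segWord, show l + 1 - k = 0 by omega]

theorem segWord_cons {k l : ℕ} (h : k ≤ l) : segWord k l = k :: segWord (k + 1) l := by
  rw [segWord, segWord, show l + 1 - k = (l + 1 - (k + 1)) + 1 by omega, List.range'_succ]

theorem segWord_append {k m l : ℕ} (hkm : k ≤ m + 1) (hml : m ≤ l) :
    segWord k m ++ segWord (m + 1) l = segWord k l := by
  have h := @List.range'_append k (m + 1 - k) (l + 1 - (m + 1)) 1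
  rwa [show k + 1 * (m + 1 - k) = m + 1 by omega,
    show m + 1 - k + (l + 1 - (m + 1)) = l + 1 - k by omega] at h

theorem segWord_le_segWord_right {k m l : ℕ} (hml : m ≤ l) : segWord k m ≤ segWord k l := by
  rcases le_or_gt k (m + 1) with hkm | hkm
  · rw [← segWord_append hkm hml]
    exact le_append_right _ _
  · rw [segWord_of_lt (by omega)]
    exact nil_le _

theorem segWord_lt_segWord_right {k m l : ℕ} (hml : m < l) (hkl : k ≤ l) :
    segWord k m < segWord k l := by
  rcases le_or_gt k (m + 1) with hkm | hkm
  · rw [← segWord_append hkm hml.le, segWord_cons (show m + 1 ≤ l by omega)]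
    simpa using List.append_left_lt (l₁ := segWord k m) (List.nil_lt_cons (m + 1) _)
  · rw [segWord_of_lt (by omega), segWord_cons hkl]
    exact List.nil_lt_cons _ _

theorem segWord_lt_segWord_left {k l k' l' : ℕ} (hk : k < k') (hkl' : k' ≤ l') :
    segWord k l < segWord k' l' := by
  rw [segWord_cons hkl']
  rcases le_or_gt k l with hkl | hkl
  · rw [segWord_cons hkl]
    exact List.Lex.rel hk
  · rw [segWord_of_lt hkl]
    exact List.nil_lt_cons _ _

abbrev insertDesc (x : List ℕ) (l : List (List ℕ)) : List (List ℕ) :=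
  l.orderedInsert (· ≥ ·) x

theorem insertDesc_of_forall_le {x : List ℕ} {l : List (List ℕ)} (hl : ∀ e ∈ l, e ≤ x) :
    insertDesc x l = x :: l := by
  cases l with
  | nil => rfl
  | cons h t => exact List.orderedInsert_cons_of_le _ t (hl h List.mem_cons_self)

theorem insertDesc_cons_of_le {x h : List ℕ} {t : List (List ℕ)} (hx : x ≤ h)
    (ht : ∀ e ∈ t, e ≤ h) : insertDesc x (h :: t) = h :: insertDesc x t := by
  by_cases hhx : h ≤ x
  · obtain rfl := le_antisymm hx hhx
    rw [insertDesc_of_forall_le ht]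
    exact List.orderedInsert_cons_of_le _ t hhx
  · exact List.orderedInsert_of_not_le _ t hhx

theorem forall_mem_insertDesc {p : List ℕ → Prop} {x : List ℕ} {l : List (List ℕ)}
    (hx : p x) (hl : ∀ e ∈ l, p e) : ∀ e ∈ insertDesc x l, p e := by
  intro e he
  rcases (List.mem_orderedInsert _).mp he with rfl | he
  exacts [hx, hl e he]

theorem insertDesc_comm (x y : List ℕ) {l : List (List ℕ)} (hl : l.Pairwise (· ≥ ·)) :
    insertDesc x (insertDesc y l) = insertDesc y (insertDesc x l) :=
  List.Perm.eq_of_sortedGE ((hl.orderedInsert _ _).orderedInsert _ _).sortedGE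
    ((hl.orderedInsert _ _).orderedInsert _ _).sortedGE <|
    ((List.perm_orderedInsert _ _ _).trans ((List.perm_orderedInsert _ _ _).cons x)).trans <|
      (List.Perm.swap y x l).trans
        ((List.perm_orderedInsert _ _ _).trans ((List.perm_orderedInsert _ _ _).cons y)).symm

theorem flatten_insertDesc_nil (l : List (List ℕ)) : (insertDesc [] l).flatten = l.flatten := by
  induction l with
  | nil => rfl
  | cons h t ih =>
    by_cases hh : h ≤ []
    · rw [eq_nil_of_le_nil hh, insertDesc, List.orderedInsert_cons_of_le (· ≥ ·) t le_rfl]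
      rfl
    · rw [insertDesc, List.orderedInsert_of_not_le (· ≥ ·) t hh, List.flatten_cons,
        List.flatten_cons, ← insertDesc, ih]

theorem flatten_insertDesc_segWord_succ {k l : ℕ} {X : List (List ℕ)}
    (hX : ∀ e ∈ X, e ≤ segWord k l) :
    (insertDesc (segWord (k + 1) l) X).flatten = segWord (k + 1) l ++ X.flatten := by
  rcases lt_or_ge k l with hkl | hkl
  · rw [insertDesc_of_forall_le fun e he =>
      (hX e he).trans (segWord_lt_segWord_left (Nat.lt_succ_self k) hkl).le, List.flatten_cons]
  · rw [segWord_of_lt (by omega), flatten_insertDesc_nil, List.nil_append]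

/-- Empty segments are allowed: what is left of a segment after its first letter must again be
one. -/
structure IsSortedSegments (l : List (List ℕ)) : Prop where
  pairwise : l.Pairwise (· ≥ ·)
  exists_segWord : ∀ e ∈ l, ∃ k m, e = segWord k m

theorem IsSortedSegments.of_cons {h : List ℕ} {t : List (List ℕ)}
    (hl : IsSortedSegments (h :: t)) : IsSortedSegments t :=
  ⟨hl.pairwise.of_cons, fun e he => hl.exists_segWord e (List.mem_cons_of_mem h he)⟩

theorem IsSortedSegments.insertDesc {l : List (List ℕ)} (hl : IsSortedSegments l) (k m : ℕ) :
    IsSortedSegments (insertDesc (segWord k m) l) :=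
  ⟨hl.pairwise.orderedInsert _ _, forall_mem_insertDesc ⟨k, m, rfl⟩ hl.exists_segWord⟩

theorem flatten_lt_cons_of_forall_head_lt {X : List (List ℕ)} {b : ℕ} (z : List ℕ)
    (hX : ∀ e ∈ X, ∀ c u, e = c :: u → c < b) : X.flatten < b :: z := by
  induction X with
  | nil => exact List.nil_lt_cons _ _
  | cons e X ih =>
    cases e with
    | nil => exact ih fun e he => hX e (List.mem_cons_of_mem _ he)
    | cons c u => exact List.Lex.rel (hX _ List.mem_cons_self c u rfl)

theorem flatten_lt_segWord_append {X : List (List ℕ)} (hX : IsSortedSegments X) {p L : ℕ}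
    (hpL : p ≤ L) (hlt : ∀ e ∈ X, e < segWord p L) (z : List ℕ) :
    X.flatten < segWord p L ++ z := by
  cases X with
  | nil =>
    rw [segWord_cons hpL]
    exact List.nil_lt_cons _ _
  | cons e Y =>
    have hle : ∀ e' ∈ e :: Y, e' ≤ e := fun e' he' => by
      rcases List.mem_cons.mp he' with rfl | he'
      exacts [le_rfl, List.rel_of_pairwise_cons hX.pairwise he']
    obtain ⟨a, b, rfl⟩ := hX.exists_segWord e List.mem_cons_self
    by_cases hprefix : a = p ∧ a ≤ b
    · obtain ⟨rfl, hab⟩ := hprefix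
      have hbL : b < L := by
        by_contra! h
        exact (hlt _ List.mem_cons_self).not_ge (segWord_le_segWord_right h)
      rw [← segWord_append (by omega) hbL.le, segWord_cons (show b + 1 ≤ L by omega),
        List.flatten_cons, List.append_assoc]
      refine List.append_left_lt (flatten_lt_cons_of_forall_head_lt _ fun e' he' c u hcu => ?_)
      have he' := hle e' (List.mem_cons_of_mem _ he')
      rw [hcu, segWord_cons hab] at he'
      have := head_le_of_cons_le_cons he'
      omega
    · rw [segWord_cons hpL]
      refine flatten_lt_cons_of_forall_head_lt _ fun e' he' c u hcu => ?_
      have he' := hle e' he'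
      have hab : a ≤ b := by
        by_contra! hba
        rw [segWord_of_lt hba, hcu] at he'
        exact List.cons_ne_nil _ _ (eq_nil_of_le_nil he')
      have hap := hlt _ List.mem_cons_self
      rw [hcu, segWord_cons hab] at he'
      rw [segWord_cons hab, segWord_cons hpL] at hap
      have := head_le_of_cons_le_cons he'
      have := List.head_le_of_lt hap
      omega

theorem flatten_exchange_lt_of_forall_lt {k M L : ℕ} (hkL : k < L) (hML : M < L)
    {l : List (List ℕ)} (hl : IsSortedSegments l)
    (hlt : ∀ e ∈ l, e < segWord (k + 1) L) :
    (insertDesc (segWord (k + 1) M) (insertDesc (segWord k L) l)).flatten <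
      (insertDesc (segWord (k + 1) L) (insertDesc (segWord k M) l)).flatten := by
  have hB : segWord k M < segWord (k + 1) L := segWord_lt_segWord_left k.lt_succ_self hkL
  have hC : segWord (k + 1) M < segWord (k + 1) L := segWord_lt_segWord_right hML hkL
  have hD : segWord k L < segWord (k + 1) L := segWord_lt_segWord_left k.lt_succ_self hkL
  rw [insertDesc_of_forall_le (forall_mem_insertDesc hB.le fun e he => (hlt e he).le),
    List.flatten_cons]
  exact flatten_lt_segWord_append ((hl.insertDesc k L).insertDesc (k + 1) M) hkL
    (forall_mem_insertDesc hC (forall_mem_insertDesc hD hlt)) _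

theorem flatten_exchange_lt {k M L : ℕ} (hkL : k < L) (hML : M < L)
    {l : List (List ℕ)} (hl : IsSortedSegments l) :
    (insertDesc (segWord (k + 1) M) (insertDesc (segWord k L) l)).flatten <
      (insertDesc (segWord (k + 1) L) (insertDesc (segWord k M) l)).flatten := by
  induction l with
  | nil => exact flatten_exchange_lt_of_forall_lt hkL hML hl (by simp)
  | cons h t ih =>
    by_cases hA : segWord (k + 1) L ≤ h
    · have ht : ∀ e ∈ t, e ≤ h := fun e he => List.rel_of_pairwise_cons hl.pairwise he
      have hB := (segWord_lt_segWord_left k.lt_succ_self hkL (l := M)).le.trans hA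
      have hC := (segWord_lt_segWord_right hML hkL).le.trans hA
      have hD := (segWord_lt_segWord_left k.lt_succ_self hkL (l := L)).le.trans hA
      rw [insertDesc_cons_of_le hD ht, insertDesc_cons_of_le hC (forall_mem_insertDesc hD ht),
        insertDesc_cons_of_le hB ht, insertDesc_cons_of_le hA (forall_mem_insertDesc hB ht),
        List.flatten_cons, List.flatten_cons]
      exact List.append_left_lt (ih hl.of_cons)
    · refine flatten_exchange_lt_of_forall_lt hkL hML hl fun e he => ?_
      rcases List.mem_cons.mp he with rfl | he
      exacts [not_le.mp hA, (List.rel_of_pairwise_cons hl.pairwise he).trans_lt (not_le.mp hA)]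

theorem isShuffle_flatten_insertDesc (l : List (List ℕ)) (s : List ℕ) :
    IsShuffle l.flatten s (insertDesc s l).flatten := by
  induction l with
  | nil => simpa using isShuffle_append_self [] s
  | cons h t ih =>
    by_cases hh : h ≤ s
    · rw [insertDesc, List.orderedInsert_cons_of_le (· ≥ ·) t hh, List.flatten_cons]
      exact isShuffle_append_self _ s
    · rw [insertDesc, List.orderedInsert_of_not_le (· ≥ ·) t hh, List.flatten_cons,
        List.flatten_cons]
      exact ih.append_left h

theorem cons_flatten_insertDesc_succ_le {l : List (List ℕ)} (hl : IsSortedSegments l)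
    {k m : ℕ} (hkm : k ≤ m) :
    k :: (insertDesc (segWord (k + 1) m) l).flatten ≤ (insertDesc (segWord k m) l).flatten := by
  by_cases hall : ∀ e ∈ l, e ≤ segWord k m
  · rw [flatten_insertDesc_segWord_succ hall, insertDesc_of_forall_le hall, List.flatten_cons,
      segWord_cons hkm, List.cons_append]
  obtain ⟨f, t, rfl⟩ : ∃ f t, l = f :: t := by
    cases l with
    | nil => simp at hall
    | cons f t => exact ⟨f, t, rfl⟩
  have ht : ∀ e ∈ t, e ≤ f := fun e he => List.rel_of_pairwise_cons hl.pairwise he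
  have hsf : segWord k m < f := by
    by_contra! hfs
    exact hall fun e he => (List.mem_cons.mp he).elim (· ▸ hfs) fun he => (ht e he).trans hfs
  obtain ⟨k', l', rfl⟩ := hl.exists_segWord f List.mem_cons_self
  have hkl' : k' ≤ l' := by
    by_contra! h
    rw [segWord_of_lt h] at hsf
    exact List.not_lt_nil _ hsf
  rw [insertDesc_cons_of_le hsf.le ht, List.flatten_cons, ← insertDesc_of_forall_le ht]
  have hkk' : k ≤ k' := by
    rw [segWord_cons hkm, segWord_cons hkl'] at hsf
    exact List.head_le_of_lt hsf
  rcases hkk'.lt_or_eq with hlt | rfl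
  · rw [segWord_cons hkl', List.cons_append]
    exact le_of_lt (List.Lex.rel hlt)
  have hml' : m < l' := by
    by_contra! h
    exact hsf.not_ge (segWord_le_segWord_right h)
  rw [show segWord k l' ++ _ =
      k :: (insertDesc (segWord (k + 1) l') (insertDesc (segWord k m) t)).flatten by
    rw [flatten_insertDesc_segWord_succ (forall_mem_insertDesc hsf.le ht), segWord_cons hkl',
      List.cons_append]]
  exact List.cons_le_cons _ (flatten_exchange_lt (by omega) hml' hl.of_cons).le

theorem cons_flatten_insertDesc_tail_le {k l : ℕ} {t : List (List ℕ)}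
    (hl : IsSortedSegments (segWord k l :: t)) (hkl : k ≤ l) (k₂ m : ℕ) :
    k :: (insertDesc (segWord k₂ m) (insertDesc (segWord (k + 1) l) t)).flatten ≤
      (insertDesc (segWord k₂ m) (segWord k l :: t)).flatten := by
  have ht : ∀ e ∈ t, e ≤ segWord k l := fun e he => List.rel_of_pairwise_cons hl.pairwise he
  by_cases hsf : segWord k₂ m ≤ segWord k l
  · rw [insertDesc_comm _ _ hl.of_cons.pairwise,
      flatten_insertDesc_segWord_succ (forall_mem_insertDesc hsf ht),
      insertDesc_cons_of_le hsf ht, List.flatten_cons, segWord_cons hkl, List.cons_append]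
  have hfs := not_le.mp hsf
  have hkm : k₂ ≤ m := by
    by_contra! h
    rw [segWord_of_lt h] at hfs
    exact List.not_lt_nil _ hfs
  have hall : ∀ e ∈ segWord k l :: t, e ≤ segWord k₂ m :=
    List.forall_mem_cons.mpr ⟨hfs.le, fun e he => (ht e he).trans hfs.le⟩
  rw [insertDesc_of_forall_le hall, List.flatten_cons, List.flatten_cons]
  have hkk₂ : k ≤ k₂ := by
    rw [segWord_cons hkl, segWord_cons hkm] at hfs
    exact List.head_le_of_lt hfs
  rcases hkk₂.lt_or_eq with hlt | rfl
  · rw [segWord_cons hkm, List.cons_append]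
    exact le_of_lt (List.Lex.rel hlt)
  have hlm : l < m := by
    by_contra! h
    exact hsf (segWord_le_segWord_right h)
  have hfs' : ∀ e ∈ segWord k l :: t, e ≤ segWord (k + 1) m := fun e he =>
    (hall e he).trans (segWord_lt_segWord_left k.lt_succ_self (by omega)).le
  rw [insertDesc_comm _ _ hl.of_cons.pairwise,
    show segWord k m ++ (segWord k l ++ t.flatten) =
        k :: (insertDesc (segWord (k + 1) m) (insertDesc (segWord k l) t)).flatten by
      rw [insertDesc_of_forall_le ht, insertDesc_of_forall_le hfs', List.flatten_cons,
        List.flatten_cons, segWord_cons hkm, List.cons_append]]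
  exact List.cons_le_cons _ (flatten_exchange_lt (by omega) hlm hl.of_cons).le

theorem le_flatten_insertDesc_of_isShuffle {w : List ℕ} {l : List (List ℕ)}
    (hl : IsSortedSegments l) {k m : ℕ} (hw : IsShuffle l.flatten (segWord k m) w) :
    w ≤ (insertDesc (segWord k m) l).flatten := by
  induction w generalizing l k m with
  | nil => exact nil_le _
  | cons c w ih =>
    rcases hw.cons_inv with ⟨u, hu, hw⟩ | ⟨v, hv, hw⟩
    · obtain ⟨f, t, rfl⟩ : ∃ f t, l = f :: t := by
        cases l with
        | nil => exact absurd hu (List.cons_ne_nil _ _).symm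
        | cons f t => exact ⟨f, t, rfl⟩
      obtain ⟨a, b, rfl⟩ := hl.exists_segWord f List.mem_cons_self
      have ht : ∀ e ∈ t, e ≤ segWord a b := fun e he => List.rel_of_pairwise_cons hl.pairwise he
      have hab : a ≤ b := by
        by_contra! hba
        refine List.cons_ne_nil c u (hu.symm.trans (List.flatten_eq_nil_iff.mpr fun e he => ?_))
        rcases List.mem_cons.mp he with rfl | he
        exacts [segWord_of_lt hba, eq_nil_of_le_nil ((ht e he).trans_eq (segWord_of_lt hba))]
      rw [List.flatten_cons, segWord_cons hab, List.cons_append] at hu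
      obtain ⟨rfl, rfl⟩ := List.cons.inj hu
      rw [← flatten_insertDesc_segWord_succ ht] at hw
      exact (List.cons_le_cons _ (ih (hl.of_cons.insertDesc _ _) hw)).trans
        (cons_flatten_insertDesc_tail_le hl hab k m)
    · have hkm : k ≤ m := by
        by_contra! h
        rw [segWord_of_lt h] at hv
        exact List.cons_ne_nil _ _ hv.symm
      rw [segWord_cons hkm] at hv
      obtain ⟨rfl, rfl⟩ := List.cons.inj hv
      exact (List.cons_le_cons _ (ih hl hw)).trans (cons_flatten_insertDesc_succ_le hl hkm)

theorem isGreatest_isShuffle_insertDesc {l : List (List ℕ)} (hl : IsSortedSegments l)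
    (k m : ℕ) :
    IsGreatest {w | IsShuffle l.flatten (segWord k m) w} (insertDesc (segWord k m) l).flatten :=
  ⟨isShuffle_flatten_insertDesc l _, fun _ hw => le_flatten_insertDesc_of_isShuffle hl hw⟩

end SegmentShuffle

open SegmentShuffle

theorem compatibility_strict_inequality_general (n j : ℕ) (hn : 4 ≤ n)
    (hj2 : j ≤ n - 2)
    (μ : List ℕ) (hμ : IsDominant n μ)
    (a b c d : List ℕ)
    (ha : IsGreatest {w | IsShuffle μ (segWord (j + 1) n) w} a)
    (hb : IsGreatest {w | IsShuffle a (segWord j (n - 1)) w} b)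
    (hc : IsGreatest {w | IsShuffle μ (segWord (j + 1) (n - 1)) w} c)
    (hd : IsGreatest {w | IsShuffle c (segWord j n) w} d) :
    d < b := by
  obtain ⟨fs, hchain, hsegs, rfl⟩ := hμ
  have hfs : IsSortedSegments fs :=
    ⟨List.isChain_iff_pairwise.mp hchain, fun e he =>
      let ⟨k, l, _, _, _, h⟩ := hsegs e he; ⟨k, l, h⟩⟩
  obtain rfl := ha.unique (isGreatest_isShuffle_insertDesc hfs _ _)
  obtain rfl := hb.unique (isGreatest_isShuffle_insertDesc (hfs.insertDesc _ _) _ _)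
  obtain rfl := hc.unique (isGreatest_isShuffle_insertDesc hfs _ _)
  obtain rfl := hd.unique (isGreatest_isShuffle_insertDesc (hfs.insertDesc _ _) _ _)
  rw [insertDesc_comm _ _ hfs.pairwise, insertDesc_comm (segWord j (n - 1)) _ hfs.pairwise]
  exact flatten_exchange_lt (by omega) (by omega) hfs

/-- For n ≥ 4, 2 ≤ j ≤ n−2 and every dominant word μ over {1,…,n}:
`(μ ⊙ ⟨j+1,n⟩) ⊙ ⟨j,n−1⟩ > (μ ⊙ ⟨j+1,n−1⟩) ⊙ ⟨j,n⟩`, where `⊙` is the lexicographically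
greatest shuffle. -/
theorem compatibility_strict_inequality (n j : ℕ) (hn : 4 ≤ n)
    (hj1 : 2 ≤ j) (hj2 : j ≤ n - 2)
    (μ : List ℕ) (hμ : IsDominant n μ)
    (a b c d : List ℕ)
    (ha : IsGreatest {w | IsShuffle μ (segWord (j + 1) n) w} a)
    (hb : IsGreatest {w | IsShuffle a (segWord j (n - 1)) w} b)
    (hc : IsGreatest {w | IsShuffle μ (segWord (j + 1) (n - 1)) w} c)
    (hd : IsGreatest {w | IsShuffle c (segWord j n) w} d) :
    d < b :=
  compatibility_strict_inequality_general n j hn hj2 μ hμ a b c d ha hb hc hd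
end

section
/- Let n ≥ 1 and r_n = n(n+1)/2. Index the coordinates of ℤ^{r_n} by the segments of {1,…,n} listed in decreasing lexicographic order, and for a dominant word μ let v(μ) ∈ ℕ^{r_n} be its multiplicity vector. Then for any two dominant words μ, ν over {1,…,n}: μ < ν in the lexicographic order on words if and only if v(μ) ≠ v(ν) and the first nonzero coordinate of v(ν) − v(μ) (with respect to the chosen coordinate order) is positive. -/
/-- The segments of {1,…,n}, enumerated in decreasing lexicographic order
(first component descending, then second component descending). -/
def segEnum (n : ℕ) : List (ℕ × ℕ) :=
  ((List.range' 1 n).reverse.map fun k =>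
    (List.range' k (n + 1 - k)).reverse.map fun l => (k, l)).flatten

/-- The multiplicity vector of a dominant word with canonical factorization `fs`:
the list of multiplicities of the segments, in decreasing lexicographic order of segments. -/
def multVec (n : ℕ) (fs : List (List ℕ)) : List ℕ :=
  (segEnum n).map fun p => fs.count (segWord p.1 p.2)

/-!
A word built from segments that are all smaller than a segment `σ` is lexicographically smaller
than every word beginning with `σ`: the first segment either starts with a smaller letter, or is a
proper prefix of `σ` after which the next segment starts with a letter at most the first letter
of `σ`. Hence concatenation is strictly monotone on weakly decreasing lists of segments, ordered
lexicographically as lists of words. Finally, a weakly decreasing list over a strictly decreasing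
alphabet `p₁ > p₂ > ⋯` is `p₁^{a₁} p₂^{a₂} ⋯`, and two such lists compare as their exponent
vectors `(a₁, a₂, …)` do.
-/

open List

lemma List.append_lt_append_left_iff {α : Type*} [LinearOrder α] {l l₁ l₂ : List α} :
    l ++ l₁ < l ++ l₂ ↔ l₁ < l₂ := by
  induction l <;> simp [*]

lemma List.lt_iff_exists_getD_lt {α : Type*} [LinearOrder α] {l₁ l₂ : List α}
    (h : l₁.length = l₂.length) (d : α) :
    l₁ < l₂ ↔
      ∃ t < l₁.length, (∀ s < t, l₁.getD s d = l₂.getD s d) ∧ l₁.getD t d < l₂.getD t d := by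
  have getD_eq {l : List α} {s : ℕ} (hs : s < l.length) : l.getD s d = l[s] := by simp [hs]
  have not_shorter : ¬ l₁.length < l₂.length := by omega
  rw [List.lt_iff_exists]
  simp only [not_shorter, and_false, false_or]
  constructor
  · rintro ⟨t, h₁, h₂, heq, hlt⟩
    refine ⟨t, h₁, fun s hs => ?_, ?_⟩
    · rw [getD_eq (by omega), getD_eq (by omega)]; exact heq s hs
    · rwa [getD_eq h₁, getD_eq h₂]
  · rintro ⟨t, h₁, heq, hlt⟩
    have h₂ : t < l₂.length := h ▸ h₁
    refine ⟨t, h₁, h₂, fun s hs => ?_, ?_⟩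
    · rw [← getD_eq, ← getD_eq]; exact heq s hs
    · rwa [getD_eq h₁, getD_eq h₂] at hlt

lemma segWord_eq_cons {k l : ℕ} (h : k ≤ l) : segWord k l = k :: segWord (k + 1) l := by
  rw [segWord, segWord, show l + 1 - k = l + 1 - (k + 1) + 1 by omega, List.range'_succ]

lemma segWord_eq_append {k m l : ℕ} (hkm : k ≤ m + 1) (hml : m ≤ l) :
    segWord k l = segWord k m ++ segWord (m + 1) l := by
  rw [segWord, segWord, segWord, show l + 1 - k = (m + 1 - k) + (l + 1 - (m + 1)) by omega,
    ← range'_append_1, show k + (m + 1 - k) = m + 1 by omega]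

lemma segWord_lt_segWord_of_lt {a b k l : ℕ} (hab : a ≤ b) (hkl : k ≤ l)
    (h : toLex (a, b) < toLex (k, l)) : segWord a b < segWord k l := by
  rcases Prod.Lex.toLex_lt_toLex.mp h with hak | ⟨rfl, hbl⟩
  · rw [segWord_eq_cons hab, segWord_eq_cons hkl]
    exact Lex.rel hak
  · rw [segWord_eq_append (by omega) hbl.le]
    simpa using append_left_lt (l₁ := segWord a b) (l₂ := [])
      (by simp [segWord_eq_cons (Nat.succ_le_of_lt hbl)])

lemma segWord_lt_segWord_iff {a b k l : ℕ} (hab : a ≤ b) (hkl : k ≤ l) :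
    segWord a b < segWord k l ↔ toLex (a, b) < toLex (k, l) := by
  refine ⟨fun h => ?_, segWord_lt_segWord_of_lt hab hkl⟩
  rcases lt_trichotomy (toLex (a, b)) (toLex (k, l)) with hlt | heq | hgt
  · exact hlt
  · simp_all
  · exact absurd (segWord_lt_segWord_of_lt hkl hab hgt) (lt_asymm h)

lemma flatten_lt_segWord_append {n k l : ℕ} (hkl : k ≤ l) {xs : List (List ℕ)}
    (hxs : ∀ x ∈ xs, IsSegment n x ∧ x < segWord k l) (z : List ℕ) :
    xs.flatten < segWord k l ++ z := by
  rcases xs with _ | ⟨x, xs⟩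
  · simp [segWord_eq_cons hkl]
  obtain ⟨⟨a, b, -, hab, -, rfl⟩, hlt⟩ := hxs x mem_cons_self
  rcases Prod.Lex.toLex_lt_toLex.mp ((segWord_lt_segWord_iff hab hkl).mp hlt) with hak | ⟨hak, hbl⟩
  · rw [flatten_cons, segWord_eq_cons hab, segWord_eq_cons hkl]
    exact Lex.rel hak
  obtain rfl : a = k := hak
  rw [flatten_cons, segWord_eq_append (by omega) hbl.le, append_assoc]
  refine append_left_lt ?_
  rw [segWord_eq_cons (Nat.succ_le_of_lt hbl)]
  rcases xs with _ | ⟨y, xs⟩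
  · exact nil_lt_cons _ _
  obtain ⟨⟨c, d, -, hcd, -, rfl⟩, hylt⟩ := hxs _ (mem_cons_of_mem _ mem_cons_self)
  have hca : c ≤ a := by
    rcases Prod.Lex.toLex_lt_toLex.mp ((segWord_lt_segWord_iff hcd hkl).mp hylt) with h | ⟨h, -⟩ <;>
      simp only at h <;> omega
  rw [flatten_cons, segWord_eq_cons hcd]
  exact Lex.rel (by omega)

lemma flatten_strictMonoOn (n : ℕ) :
    StrictMonoOn flatten {fs : List (List ℕ) | fs.Pairwise (· ≥ ·) ∧ ∀ u ∈ fs, IsSegment n u} := by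
  intro fs hfs gs hgs hlt
  change Lex (· < ·) fs gs at hlt
  induction hlt with
  | nil =>
    obtain ⟨k, l, -, hkl, -, rfl⟩ := hgs.2 _ mem_cons_self
    simp [segWord_eq_cons hkl]
  | cons _ ih =>
    exact append_left_lt (ih ⟨hfs.1.of_cons, fun u hu => hfs.2 u (mem_cons_of_mem _ hu)⟩
      ⟨hgs.1.of_cons, fun u hu => hgs.2 u (mem_cons_of_mem _ hu)⟩)
  | @rel u v fs gs huv =>
    obtain ⟨k, l, -, hkl, -, rfl⟩ := hgs.2 _ mem_cons_self
    refine flatten_lt_segWord_append hkl (fun x hx => ⟨hfs.2 x hx, ?_⟩) gs.flatten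
    rcases mem_cons.mp hx with rfl | hx
    · exact huv
    · exact lt_of_le_of_lt (rel_of_pairwise_cons hfs.1 hx) huv

section CountVector

variable {α : Type*} [LinearOrder α]

lemma exists_eq_replicate_append {p : α} {L xs : List α} (hL : (p :: L).Pairwise (· > ·))
    (hxs : xs.Pairwise (· ≥ ·)) (hxL : ∀ x ∈ xs, x ∈ p :: L) :
    ∃ a xs', xs = replicate a p ++ xs' ∧ xs'.Pairwise (· ≥ ·) ∧ ∀ x ∈ xs', x ∈ L := by
  induction xs with
  | nil => exact ⟨0, [], rfl, Pairwise.nil, by simp⟩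
  | cons x xs ih =>
    by_cases hxp : x = p
    · obtain ⟨a, xs', rfl, hxs', hxL'⟩ :=
        ih hxs.of_cons (fun y hy => hxL y (mem_cons_of_mem _ hy))
      exact ⟨a + 1, xs', by simp [hxp, replicate_succ], hxs', hxL'⟩
    refine ⟨0, x :: xs, rfl, hxs, fun y hy => ?_⟩
    have hyx : y ≤ x := by
      rcases mem_cons.mp hy with rfl | hy
      · exact le_rfl
      · exact rel_of_pairwise_cons hxs hy
    have hxL' : x ∈ L := (mem_cons.mp (hxL x mem_cons_self)).resolve_left hxp
    have hyp : y ≠ p := (lt_of_le_of_lt hyx (rel_of_pairwise_cons hL hxL')).ne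
    exact (mem_cons.mp (hxL y hy)).resolve_left hyp

lemma map_count_replicate_append [BEq α] [LawfulBEq α] {p : α} {L xs : List α}
    (hL : (p :: L).Pairwise (· > ·)) (hxL : ∀ x ∈ xs, x ∈ L) (a : ℕ) :
    (p :: L).map (replicate a p ++ xs).count = a :: L.map xs.count := by
  have hpL : ∀ q ∈ L, q ≠ p := fun q hq => (rel_of_pairwise_cons hL hq).ne
  have hpxs : xs.count p = 0 := count_eq_zero.mpr fun hp => hpL p (hxL p hp) rfl
  simp only [map_cons, count_append, count_replicate_self, hpxs, add_zero, cons.injEq, true_and]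
  refine map_congr_left fun q hq => ?_
  simp [count_replicate, (hpL q hq).symm]

lemma replicate_append_lt_replicate_append {p : α} {a b : ℕ} (hab : a < b) {xs : List α}
    (hxs : ∀ x ∈ xs, x < p) (ys : List α) :
    replicate a p ++ xs < replicate b p ++ ys := by
  obtain ⟨c, rfl⟩ : ∃ c, b = a + (c + 1) := ⟨b - a - 1, by omega⟩
  rw [replicate_add, append_assoc, replicate_succ, cons_append]
  refine append_left_lt ?_
  rcases xs with _ | ⟨x, xs⟩
  · exact nil_lt_cons _ _
  · exact Lex.rel (hxs x mem_cons_self)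

theorem lt_iff_map_count_lt [BEq α] [LawfulBEq α] {L xs ys : List α} (hL : L.Pairwise (· > ·))
    (hxs : xs.Pairwise (· ≥ ·)) (hys : ys.Pairwise (· ≥ ·))
    (hxL : ∀ x ∈ xs, x ∈ L) (hyL : ∀ y ∈ ys, y ∈ L) :
    xs < ys ↔ L.map xs.count < L.map ys.count := by
  induction L generalizing xs ys with
  | nil =>
    obtain rfl : xs = [] := eq_nil_iff_forall_not_mem.mpr fun x hx => not_mem_nil (hxL x hx)
    obtain rfl : ys = [] := eq_nil_iff_forall_not_mem.mpr fun y hy => not_mem_nil (hyL y hy)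
    simp
  | cons p L ih =>
    obtain ⟨a, xs', rfl, hxs', hxL'⟩ := exists_eq_replicate_append hL hxs hxL
    obtain ⟨b, ys', rfl, hys', hyL'⟩ := exists_eq_replicate_append hL hys hyL
    have hltp {zs : List α} (hzL : ∀ z ∈ zs, z ∈ L) : ∀ z ∈ zs, z < p :=
      fun z hz => rel_of_pairwise_cons hL (hzL z hz)
    rw [map_count_replicate_append hL hxL', map_count_replicate_append hL hyL', cons_lt_cons_iff]
    rcases lt_trichotomy a b with hab | rfl | hab
    · simp [hab, replicate_append_lt_replicate_append hab (hltp hxL')]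
    · rw [append_lt_append_left_iff, ih hL.of_cons hxs' hys' hxL' hyL']
      simp
    · simp only [hab.not_gt, hab.ne', false_or, false_and, iff_false]
      exact (replicate_append_lt_replicate_append hab (hltp hyL') _).asymm

end CountVector

def segWords (n : ℕ) : List (List ℕ) := (segEnum n).map fun p => segWord p.1 p.2

lemma mem_segEnum {n k l : ℕ} : (k, l) ∈ segEnum n ↔ 1 ≤ k ∧ k ≤ l ∧ l ≤ n := by
  simp only [segEnum, mem_flatten, mem_map, mem_reverse, mem_range'_1, exists_exists_and_eq_and,
    Prod.mk.injEq]
  constructor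
  · rintro ⟨k', hk', l', hl', rfl, rfl⟩
    omega
  · rintro ⟨h1, h2, h3⟩
    exact ⟨k, by omega, l, by omega, rfl, rfl⟩

lemma pairwise_segEnum (n : ℕ) : (segEnum n).Pairwise fun p q => toLex q < toLex p := by
  simp only [segEnum, pairwise_flatten, mem_map, mem_reverse, forall_exists_index, and_imp,
    forall_apply_eq_imp_iff₂, pairwise_map, pairwise_reverse]
  refine ⟨fun k _ => (pairwise_lt_range' 1).imp fun h => ?_, (pairwise_lt_range' 1).imp fun h => ?_⟩
  · exact Prod.Lex.toLex_lt_toLex.mpr (Or.inr ⟨rfl, h⟩)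
  · intro _ _ _ _
    exact Prod.Lex.toLex_lt_toLex.mpr (Or.inl h)

lemma pairwise_segWords (n : ℕ) : (segWords n).Pairwise (· > ·) := by
  refine pairwise_map.mpr ((pairwise_segEnum n).imp_of_mem fun {p q} hp hq hqp => ?_)
  have hp' := mem_segEnum.mp hp
  have hq' := mem_segEnum.mp hq
  exact segWord_lt_segWord_of_lt hq'.2.1 hp'.2.1 hqp

lemma mem_segWords_of_isSegment {n : ℕ} {u : List ℕ} (h : IsSegment n u) : u ∈ segWords n := by
  obtain ⟨k, l, h1, h2, h3, rfl⟩ := h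
  exact mem_map.mpr ⟨(k, l), mem_segEnum.mpr ⟨h1, h2, h3⟩, rfl⟩

lemma multVec_eq_map_count (n : ℕ) (fs : List (List ℕ)) :
    multVec n fs = (segWords n).map fs.count := by
  simp [multVec, segWords, map_map, Function.comp_def]

theorem lex_lt_iff_multVec_general (n : ℕ) (μ ν : List ℕ)
    (fs gs : List (List ℕ))
    (hfs_dec : List.Chain' (· ≥ ·) fs) (hfs_seg : ∀ u ∈ fs, IsSegment n u)
    (hμ : fs.flatten = μ)
    (hgs_dec : List.Chain' (· ≥ ·) gs) (hgs_seg : ∀ u ∈ gs, IsSegment n u)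
    (hν : gs.flatten = ν) :
    μ < ν ↔
      (multVec n fs ≠ multVec n gs ∧
        ∃ t, t < (segEnum n).length ∧
          (∀ s, s < t → (multVec n fs).getD s 0 = (multVec n gs).getD s 0) ∧
          (multVec n fs).getD t 0 < (multVec n gs).getD t 0) := by
  subst hμ hν
  have hfs : fs.Pairwise (· ≥ ·) := isChain_iff_pairwise.mp hfs_dec
  have hgs : gs.Pairwise (· ≥ ·) := isChain_iff_pairwise.mp hgs_dec
  have hlen (hs : List (List ℕ)) : (multVec n hs).length = (segEnum n).length := length_map _
  have hcounts : fs.flatten < gs.flatten ↔ multVec n fs < multVec n gs := by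
    rw [(flatten_strictMonoOn n).lt_iff_lt ⟨hfs, hfs_seg⟩ ⟨hgs, hgs_seg⟩,
      multVec_eq_map_count, multVec_eq_map_count]
    exact lt_iff_map_count_lt (pairwise_segWords n) hfs hgs
      (fun u hu => mem_segWords_of_isSegment (hfs_seg u hu))
      (fun u hu => mem_segWords_of_isSegment (hgs_seg u hu))
  rw [hcounts, ← hlen fs, ← lt_iff_exists_getD_lt ((hlen fs).trans (hlen gs).symm)]
  exact ⟨fun h => ⟨h.ne, h⟩, And.right⟩

/-- For dominant words μ, ν over {1,…,n} (given by their canonical factorizations `fs`, `gs`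
into weakly decreasing segments): μ < ν in the lexicographic order iff v(μ) ≠ v(ν) and the
first nonzero coordinate of v(ν) − v(μ) is positive. -/
theorem lex_lt_iff_multVec (n : ℕ) (hn : 1 ≤ n) (μ ν : List ℕ)
    (fs gs : List (List ℕ))
    (hfs_dec : List.Chain' (· ≥ ·) fs) (hfs_seg : ∀ u ∈ fs, IsSegment n u)
    (hμ : fs.flatten = μ)
    (hgs_dec : List.Chain' (· ≥ ·) gs) (hgs_seg : ∀ u ∈ gs, IsSegment n u)
    (hν : gs.flatten = ν) :
    μ < ν ↔
      (multVec n fs ≠ multVec n gs ∧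
        ∃ t, t < (segEnum n).length ∧
          (∀ s, s < t → (multVec n fs).getD s 0 = (multVec n gs).getD s 0) ∧
          (multVec n fs).getD t 0 < (multVec n gs).getD t 0) :=
  lex_lt_iff_multVec_general n μ ν fs gs hfs_dec hfs_seg hμ hgs_dec hgs_seg hν
end
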